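/- Let X be a DG B^e-module. The map ϖ : Hom_{B^e}(J, X) → Der_A(B, X) sending a graded B^e-linear map f of degree n to f ∘ δ is an isomorphism of topological left DG B-modules; in particular Der_A(B,X) ≅ Hom_{B^e}(J,X). -/

import Mathlib

/- ------------------------------------------------------------------
A self-contained framework for differential graded (DG) homological
algebra, following Nasseh–Ono–Yoshino, "Connections and naïve lifting
of DG modules".
------------------------------------------------------------------ -/

noncomputable section

namespace DG

universe u

/-- The sign `(-1)^n` for `n : ℤ`. -/
def sgn (n : ℤ) : ℤ := ((-1 : ℤˣ) ^ n : ℤˣ)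

/-- A (non-negatively graded, strictly graded-commutative) DG `R`-algebra:
a graded `R`-algebra `A = ⊕_{n ≥ 0} A_n` with `ab = (-1)^{|a||b|} ba`,
`a² = 0` for `|a|` odd, and a degree `-1` differential `d` with `d ∘ d = 0`
satisfying the Leibniz rule. -/
structure DGAlg (R : Type u) [CommRing R] : Type (u + 1) where
  carrier : Type u
  [ring : Ring carrier]
  [alg : Algebra R carrier]
  gr : ℤ → Submodule R carrier
  internal : DirectSum.IsInternal gr
  nonneg : ∀ i : ℤ, i < 0 → gr i = ⊥
  one_mem : (1 : carrier) ∈ gr 0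
  mul_mem : ∀ {i j : ℤ} {a b : carrier}, a ∈ gr i → b ∈ gr j → a * b ∈ gr (i + j)
  gcomm : ∀ {i j : ℤ} {a b : carrier}, a ∈ gr i → b ∈ gr j → a * b = sgn (i * j) • (b * a)
  sq_zero : ∀ {i : ℤ} {a : carrier}, a ∈ gr i → Odd i → a * a = 0
  d : carrier →ₗ[R] carrier
  d_mem : ∀ {i : ℤ} {a : carrier}, a ∈ gr i → d a ∈ gr (i - 1)
  d_d : ∀ a : carrier, d (d a) = 0
  leibniz : ∀ {i : ℤ} {a : carrier} (b : carrier), a ∈ gr i →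
    d (a * b) = d a * b + sgn i • (a * d b)

attribute [instance] DGAlg.ring DGAlg.alg

variable {R : Type u} [CommRing R]

/-- A right DG module over a DG `R`-algebra `S`. -/
structure DGMod (S : DGAlg R) : Type (u + 1) where
  carrier : Type u
  [acg : AddCommGroup carrier]
  [mod : Module R carrier]
  /-- the right `S`-action -/
  smul : carrier → S.carrier → carrier
  smul_add : ∀ (m : carrier) (a b : S.carrier), smul m (a + b) = smul m a + smul m b
  add_smul : ∀ (m n : carrier) (a : S.carrier), smul (m + n) a = smul m a + smul n a
  smul_rsmul : ∀ (r : R) (m : carrier) (a : S.carrier), smul (r • m) a = r • smul m a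
  smul_one : ∀ m : carrier, smul m 1 = m
  smul_mul : ∀ (m : carrier) (a b : S.carrier), smul m (a * b) = smul (smul m a) b
  smul_algebraMap : ∀ (r : R) (m : carrier), smul m (algebraMap R S.carrier r) = r • m
  gr : ℤ → Submodule R carrier
  internal : DirectSum.IsInternal gr
  smul_mem : ∀ {i j : ℤ} {m : carrier} {a : S.carrier},
    m ∈ gr i → a ∈ S.gr j → smul m a ∈ gr (i + j)
  d : carrier →ₗ[R] carrier
  d_mem : ∀ {i : ℤ} {m : carrier}, m ∈ gr i → d m ∈ gr (i - 1)
  d_d : ∀ m : carrier, d (d m) = 0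
  leibniz : ∀ {i : ℤ} {m : carrier} (a : S.carrier), m ∈ gr i →
    d (smul m a) = smul (d m) a + sgn i • smul m (S.d a)

attribute [instance] DGMod.acg DGMod.mod

/-- Decomposition of a DG algebra into its homogeneous components. -/
noncomputable def DGAlg.dec (S : DGAlg R) : S.carrier ≃ DirectSum ℤ (fun i => S.gr i) :=
  (Equiv.ofBijective _ S.internal).symm

/-- Decomposition of a DG module into its homogeneous components. -/
noncomputable def DGMod.dec {S : DGAlg R} (M : DGMod S) :
    M.carrier ≃ DirectSum ℤ (fun i => M.gr i) :=
  (Equiv.ofBijective _ M.internal).symm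

/-- The left action `a • x := (-1)^{|a||x|} x a` on a right DG module over the
strictly graded-commutative DG algebra `S`, extended bilinearly. -/
noncomputable def DGMod.lsmul {S : DGAlg R} (M : DGMod S) (a : S.carrier) (x : M.carrier) :
    M.carrier :=
  (DFinsupp.sumAddHom (fun i => AddMonoidHom.mk'
    (fun ai : S.gr i => DFinsupp.sumAddHom (fun j => AddMonoidHom.mk'
      (fun xj : M.gr j => sgn (i * j) • M.smul (xj : M.carrier) (ai : S.carrier))
      (by intro x y; simp [M.add_smul, smul_add]))
    )
    (by
      intro ai ai'
      refine DFinsupp.addHom_ext fun j xj => ?_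
      simp [DFinsupp.sumAddHom_single, M.smul_add, smul_add]))
    (S.dec a)) (M.dec x)

/-- `f : M → N` is a graded `S`-linear map of degree `n`. -/
def IsGLin {S : DGAlg R} (M N : DGMod S) (n : ℤ) (f : M.carrier → N.carrier) : Prop :=
  (∀ x y : M.carrier, f (x + y) = f x + f y) ∧
  (∀ (r : R) (x : M.carrier), f (r • x) = r • f x) ∧
  (∀ (x : M.carrier) (a : S.carrier), f (M.smul x a) = N.smul (f x) a) ∧
  (∀ i : ℤ, ∀ x ∈ M.gr i, f x ∈ N.gr (i + n))

/-- `f` belongs to `Hom_S(M,N) = ⊕_{n ∈ ℤ} Hom_{gr(S)}(M, N(n))`, i.e. `f` is a finite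
sum of homogeneous graded `S`-linear maps. -/
def InSHom {S : DGAlg R} (M N : DGMod S) (f : M.carrier → N.carrier) : Prop :=
  ∃ (s : Finset ℤ) (g : ℤ → M.carrier → N.carrier),
    (∀ n ∈ s, IsGLin M N n (g n)) ∧ ∀ x, f x = ∑ n ∈ s, g n x

/-- A homomorphism of DG `R`-algebras. -/
structure DGHom (S T : DGAlg R) : Type u where
  toFun : S.carrier → T.carrier
  map_one : toFun 1 = 1
  map_mul : ∀ a b, toFun (a * b) = toFun a * toFun b
  map_add : ∀ a b, toFun (a + b) = toFun a + toFun b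
  map_algebraMap : ∀ r : R, toFun (algebraMap R S.carrier r) = algebraMap R T.carrier r
  map_gr : ∀ {i : ℤ} {a : S.carrier}, a ∈ S.gr i → toFun a ∈ T.gr i
  map_d : ∀ a, toFun (S.d a) = T.d (toFun a)

/-- The underlying ring homomorphism of a DG algebra homomorphism. -/
def DGHom.toRingHom {S T : DGAlg R} (f : DGHom S T) : S.carrier →+* T.carrier where
  toFun := f.toFun
  map_one' := f.map_one
  map_mul' := f.map_mul
  map_zero' := by
    have h := f.map_add 0 0
    rw [add_zero] at h
    exact (add_eq_left.mp h.symm)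
  map_add' := f.map_add

/-- The basic setup of the paper: a DG `R`-algebra homomorphism `φ : A → B` with `B`
projective as an underlying (graded) `A`-module, together with the enveloping DG algebra
`E = Bᵉ = B ⊗_A B` (axiomatized by its structure maps `inl : b ↦ b ⊗ 1`,
`inr : b ↦ 1 ⊗ b`, the multiplication map `mulB = π_B : Bᵉ → B` and the universal
property of the tensor product), the diagonal ideal `J = ker π_B` (a DG `Bᵉ`-module
with structure monomorphism `ιJ`), and the universal derivation
`δ : B → J`, `δ(b) = b ⊗ 1 - 1 ⊗ b`. -/
structure EnvSetup (R : Type u) [CommRing R] : Type (u + 1) where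
  A : DGAlg R
  B : DGAlg R
  φ : DGHom A B
  projB :
    letI : Module A.carrier B.carrier := Module.compHom B.carrier φ.toRingHom
    Module.Projective A.carrier B.carrier
  E : DGAlg R
  inl : DGHom B E
  inr : DGHom B E
  inl_inr_phi : ∀ a : A.carrier, inl.toFun (φ.toFun a) = inr.toFun (φ.toFun a)
  mulB : DGHom E B
  mulB_inl : ∀ b, mulB.toFun (inl.toFun b) = b
  mulB_inr : ∀ b, mulB.toFun (inr.toFun b) = b
  span : ∀ x : E.carrier,
    x ∈ Submodule.span R {y : E.carrier | ∃ b b', y = inl.toFun b * inr.toFun b'}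
  univ : ∀ (Q : Type u) [AddCommGroup Q] [Module R Q] (h : B.carrier → B.carrier → Q),
    (∀ b₁ b₂ b', h (b₁ + b₂) b' = h b₁ b' + h b₂ b') →
    (∀ b b₁ b₂, h b (b₁ + b₂) = h b b₁ + h b b₂) →
    (∀ (r : R) b b', h (r • b) b' = r • h b b') →
    (∀ (r : R) b b', h b (r • b') = r • h b b') →
    (∀ (a : A.carrier) (b b' : B.carrier), h (b * φ.toFun a) b' = h b (φ.toFun a * b')) →
    ∃! H : E.carrier →ₗ[R] Q, ∀ b b', H (inl.toFun b * inr.toFun b') = h b b'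
  J : DGMod E
  ιJ : J.carrier → E.carrier
  ιJ_add : ∀ x y, ιJ (x + y) = ιJ x + ιJ y
  ιJ_rsmul : ∀ (r : R) x, ιJ (r • x) = r • ιJ x
  ιJ_smul : ∀ x e, ιJ (J.smul x e) = ιJ x * e
  ιJ_gr : ∀ (i : ℤ) (x : J.carrier), x ∈ J.gr i ↔ ιJ x ∈ E.gr i
  ιJ_d : ∀ x, ιJ (J.d x) = E.d (ιJ x)
  ιJ_inj : Function.Injective ιJ
  ιJ_range : ∀ e : E.carrier, (∃ x, ιJ x = e) ↔ mulB.toFun e = 0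
  δ : B.carrier → J.carrier
  ιJ_δ : ∀ b, ιJ (δ b) = inl.toFun b - inr.toFun b

/-- `D : B → X` is an `A`-derivation of degree `n` with values in the DG `Bᵉ`-module `X`:
an `A`-linear graded map of degree `n` satisfying the Leibniz rule
`D(bc) = D(b)·(1⊗c) + (-1)^{|b||c|} D(c)·(b⊗1)`
(equivalently, `D(bc) = D(b)c + (-1)^{|D||b|} b D(c)`). -/
def IsDer (P : EnvSetup R) (X : DGMod P.E) (n : ℤ) (D : P.B.carrier → X.carrier) : Prop :=
  (∀ b c, D (b + c) = D b + D c) ∧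
  (∀ (r : R) b, D (r • b) = r • D b) ∧
  (∀ (b : P.B.carrier) (a : P.A.carrier),
    D (b * P.φ.toFun a) = X.smul (D b) (P.inr.toFun (P.φ.toFun a))) ∧
  (∀ i : ℤ, ∀ b ∈ P.B.gr i, D b ∈ X.gr (i + n)) ∧
  (∀ (i j : ℤ) (b c : P.B.carrier), b ∈ P.B.gr i → c ∈ P.B.gr j →
    D (b * c) = X.smul (D b) (P.inr.toFun c) + sgn (i * j) • X.smul (D c) (P.inl.toFun b))

/-- `D` belongs to `Der_A(B,X) = ⊕_{n ∈ ℤ} Der_A(B,X)_n`. -/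
def InSDer (P : EnvSetup R) (X : DGMod P.E) (D : P.B.carrier → X.carrier) : Prop :=
  ∃ (s : Finset ℤ) (g : ℤ → P.B.carrier → X.carrier),
    (∀ n ∈ s, IsDer P X n (g n)) ∧ ∀ b, D b = ∑ n ∈ s, g n b

end DG
namespace DG

variable {R : Type u} [CommRing R]

/-- The DG tensor product `N ⊗_B X` of a DG `B`-module `N` and a DG `Bᵉ`-module `X`
(a DG `B`-module via the right `B`-action on `X` through `inr`), axiomatized by its
structure map `t : (n,x) ↦ n ⊗ x`, `B`-balancedness `nb ⊗ x = (-1)^{|b||x|} n ⊗ x·(b⊗1)`,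
spanning, and the universal property. -/
structure TensorBX (P : EnvSetup R) (N : DGMod P.B) (X : DGMod P.E) : Type (u + 1) where
  T : DGMod P.B
  t : N.carrier → X.carrier → T.carrier
  t_addl : ∀ m m' x, t (m + m') x = t m x + t m' x
  t_addr : ∀ m x x', t m (x + x') = t m x + t m x'
  t_rsml : ∀ (r : R) m x, t (r • m) x = r • t m x
  t_rsmr : ∀ (r : R) m x, t m (r • x) = r • t m x
  t_smul : ∀ m x b, t m (X.smul x (P.inr.toFun b)) = T.smul (t m x) b
  t_bal : ∀ {i j : ℤ} (m : N.carrier) (x : X.carrier) (b : P.B.carrier),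
    b ∈ P.B.gr i → x ∈ X.gr j →
    t (N.smul m b) x = sgn (i * j) • t m (X.smul x (P.inl.toFun b))
  t_gr : ∀ {i j : ℤ} {m x}, m ∈ N.gr i → x ∈ X.gr j → t m x ∈ T.gr (i + j)
  t_d : ∀ {i : ℤ} (m x), m ∈ N.gr i → T.d (t m x) = t (N.d m) x + sgn i • t m (X.d x)
  span : ∀ y : T.carrier, y ∈ Submodule.span R {z : T.carrier | ∃ m x, z = t m x}
  univ : ∀ (Q : Type u) [AddCommGroup Q] [Module R Q] (h : N.carrier → X.carrier → Q),
    (∀ m m' x, h (m + m') x = h m x + h m' x) →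
    (∀ m x x', h m (x + x') = h m x + h m x') →
    (∀ (r : R) m x, h (r • m) x = r • h m x) →
    (∀ (r : R) m x, h m (r • x) = r • h m x) →
    (∀ {i j : ℤ} (m x) (b : P.B.carrier), b ∈ P.B.gr i → x ∈ X.gr j →
      h (N.smul m b) x = sgn (i * j) • h m (X.smul x (P.inl.toFun b))) →
    ∃! H : T.carrier →ₗ[R] Q, ∀ m x, H (t m x) = h m x

/-- `ψ : N → N ⊗_B X` is a `D`-connection on `N` along `X` of degree `n = |D|`:
a graded `A`-linear map of degree `n` with
`ψ(xb) = ψ(x)b + (-1)^{|D||x|} x ⊗ D(b)`. -/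
def IsConn {P : EnvSetup R} {N : DGMod P.B} {X : DGMod P.E} (τ : TensorBX P N X)
    (n : ℤ) (D : P.B.carrier → X.carrier) (ψ : N.carrier → τ.T.carrier) : Prop :=
  (∀ x y : N.carrier, ψ (x + y) = ψ x + ψ y) ∧
  (∀ (r : R) (x : N.carrier), ψ (r • x) = r • ψ x) ∧
  (∀ i : ℤ, ∀ x ∈ N.gr i, ψ x ∈ τ.T.gr (i + n)) ∧
  (∀ (i : ℤ) (x : N.carrier) (b : P.B.carrier), x ∈ N.gr i →
    ψ (N.smul x b) = τ.T.smul (ψ x) b + sgn (n * i) • τ.t x (D b))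

/-- `ψ` belongs to `Conn(N, N ⊗_B X) = ⊕_{n ∈ ℤ} Conn(N, N ⊗_B X)_n`. -/
def InSConn {P : EnvSetup R} {N : DGMod P.B} {X : DGMod P.E} (τ : TensorBX P N X)
    (ψ : N.carrier → τ.T.carrier) : Prop :=
  ∃ (s : Finset ℤ) (g : ℤ → N.carrier → τ.T.carrier) (Df : ℤ → P.B.carrier → X.carrier),
    (∀ n ∈ s, IsDer P X n (Df n) ∧ IsConn τ n (Df n) (g n)) ∧ ∀ x, ψ x = ∑ n ∈ s, g n x

/-- An `Der_A(B,X)`-connection on `N` (along the `Bᵉ`-module `X`): a DG `B`-module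
homomorphism `∇ : Der_A(B,X) → Conn(N, N ⊗_B X)` such that `∇_D` is a `D`-connection
for every `D`.  (Equivalently, a DG `B`-module splitting of `ν`.) -/
def IsLConn {P : EnvSetup R} {N : DGMod P.B} {X : DGMod P.E} (τ : TensorBX P N X)
    (Cn : (P.B.carrier → X.carrier) → N.carrier → τ.T.carrier) : Prop :=
  (∀ (n : ℤ) (D), IsDer P X n D → IsConn τ n D (Cn D)) ∧
  (∀ D D', InSDer P X D → InSDer P X D' →
    ∀ x, Cn (fun b => D b + D' b) x = Cn D x + Cn D' x) ∧
  (∀ (r : R) (D), InSDer P X D → ∀ x, Cn (fun b => r • D b) x = r • Cn D x) ∧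
  (∀ (k n : ℤ) (b : P.B.carrier) (D), b ∈ P.B.gr k → IsDer P X n D →
    ∀ x, Cn (fun c => X.lsmul (P.inl.toFun b) (D c)) x = τ.T.lsmul b (Cn D x)) ∧
  (∀ (n : ℤ) (D), IsDer P X n D →
    ∀ x, Cn (fun b => X.d (D b) - sgn n • D (P.B.d b)) x
      = τ.T.d (Cn D x) - sgn n • Cn D (N.d x))

/-- The DG tensor product `N|_A ⊗_A B` (a DG `B`-module through the right factor),
together with the canonical DG `B`-module epimorphism `pr = π_N : N|_A ⊗_A B → N`,
`n ⊗ b ↦ nb`. -/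
structure TensorAB (P : EnvSetup R) (N : DGMod P.B) : Type (u + 1) where
  T : DGMod P.B
  t : N.carrier → P.B.carrier → T.carrier
  t_addl : ∀ m m' b, t (m + m') b = t m b + t m' b
  t_addr : ∀ m b b', t m (b + b') = t m b + t m b'
  t_rsml : ∀ (r : R) m b, t (r • m) b = r • t m b
  t_rsmr : ∀ (r : R) m b, t m (r • b) = r • t m b
  t_smul : ∀ m b b', t m (b * b') = T.smul (t m b) b'
  t_bal : ∀ (m : N.carrier) (a : P.A.carrier) (b : P.B.carrier),
    t (N.smul m (P.φ.toFun a)) b = t m (P.φ.toFun a * b)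
  t_gr : ∀ {i j : ℤ} {m b}, m ∈ N.gr i → b ∈ P.B.gr j → t m b ∈ T.gr (i + j)
  t_d : ∀ {i : ℤ} (m b), m ∈ N.gr i → T.d (t m b) = t (N.d m) b + sgn i • t m (P.B.d b)
  span : ∀ y : T.carrier, y ∈ Submodule.span R {z : T.carrier | ∃ m b, z = t m b}
  univ : ∀ (Q : Type u) [AddCommGroup Q] [Module R Q] (h : N.carrier → P.B.carrier → Q),
    (∀ m m' b, h (m + m') b = h m b + h m' b) →
    (∀ m b b', h m (b + b') = h m b + h m b') →
    (∀ (r : R) m b, h (r • m) b = r • h m b) →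
    (∀ (r : R) m b, h m (r • b) = r • h m b) →
    (∀ (m : N.carrier) (a : P.A.carrier) (b : P.B.carrier),
      h (N.smul m (P.φ.toFun a)) b = h m (P.φ.toFun a * b)) →
    ∃! H : T.carrier →ₗ[R] Q, ∀ m b, H (t m b) = h m b
  pr : T.carrier → N.carrier
  pr_add : ∀ y y', pr (y + y') = pr y + pr y'
  pr_rsmul : ∀ (r : R) y, pr (r • y) = r • pr y
  pr_smul : ∀ y b, pr (T.smul y b) = N.smul (pr y) b
  pr_gr : ∀ {i : ℤ} {y}, y ∈ T.gr i → pr y ∈ N.gr i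
  pr_d : ∀ y, pr (T.d y) = N.d (pr y)
  pr_t : ∀ m b, pr (t m b) = N.smul m b

/-- `N` is naïvely liftable to `A`: the DG `B`-module epimorphism
`π_N : N|_A ⊗_A B → N` has a right inverse in the category of DG `B`-modules. -/
def NaivelyLiftable {P : EnvSetup R} {N : DGMod P.B} (σ : TensorAB P N) : Prop :=
  ∃ ρ : N.carrier → σ.T.carrier, IsGLin N σ.T 0 ρ ∧
    (∀ x, σ.T.d (ρ x) = ρ (N.d x)) ∧ ∀ x, σ.pr (ρ x) = x

end DG
namespace DG

variable {R : Type u} [CommRing R]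

/-- A DG `Bᵉ`-module `X` regarded as a DG `B`-module via `inr : B → Bᵉ`
(e.g. when `XJ = 0`, via `B ≅ Bᵉ/J`). -/
def EnvSetup.toBMod (P : EnvSetup R) (X : DGMod P.E) : DGMod P.B where
  carrier := X.carrier
  acg := X.acg
  mod := X.mod
  smul x b := X.smul x (P.inr.toFun b)
  smul_add m a b := by simp only [P.inr.map_add, X.smul_add]
  add_smul m n a := by simp only [X.add_smul]
  smul_rsmul r m a := by simp only [X.smul_rsmul]
  smul_one m := by simp only [P.inr.map_one, X.smul_one]
  smul_mul m a b := by simp only [P.inr.map_mul, X.smul_mul]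
  smul_algebraMap r m := by simp only [P.inr.map_algebraMap, X.smul_algebraMap]
  gr := X.gr
  internal := X.internal
  smul_mem h1 h2 := X.smul_mem h1 (P.inr.map_gr h2)
  d := X.d
  d_mem := X.d_mem
  d_d := X.d_d
  leibniz a h := by
    simp only [P.inr.map_d]
    exact X.leibniz (P.inr.toFun a) h

/-- A DG algebra `S` regarded as a DG module over itself. -/
def DGAlg.toSelfMod (S : DGAlg R) : DGMod S where
  carrier := S.carrier
  smul a b := a * b
  smul_add := mul_add
  add_smul := add_mul
  smul_rsmul r m a := smul_mul_assoc r m a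
  smul_one := mul_one
  smul_mul m a b := (mul_assoc m a b).symm
  smul_algebraMap r m := by rw [Algebra.smul_def, Algebra.commutes]
  gr := S.gr
  internal := S.internal
  smul_mem := S.mul_mem
  d := S.d
  d_mem := S.d_mem
  d_d := S.d_d
  leibniz := S.leibniz

/-- The DG tensor product `N ⊗_B X` of two DG `B`-modules. -/
structure TensorBB (P : EnvSetup R) (N X : DGMod P.B) : Type (u + 1) where
  T : DGMod P.B
  t : N.carrier → X.carrier → T.carrier
  t_addl : ∀ m m' x, t (m + m') x = t m x + t m' x
  t_addr : ∀ m x x', t m (x + x') = t m x + t m x'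
  t_rsml : ∀ (r : R) m x, t (r • m) x = r • t m x
  t_rsmr : ∀ (r : R) m x, t m (r • x) = r • t m x
  t_smul : ∀ m x b, t m (X.smul x b) = T.smul (t m x) b
  t_bal : ∀ {i j : ℤ} (m : N.carrier) (x : X.carrier) (b : P.B.carrier),
    b ∈ P.B.gr i → x ∈ X.gr j →
    t (N.smul m b) x = sgn (i * j) • t m (X.smul x b)
  t_gr : ∀ {i j : ℤ} {m x}, m ∈ N.gr i → x ∈ X.gr j → t m x ∈ T.gr (i + j)
  t_d : ∀ {i : ℤ} (m x), m ∈ N.gr i → T.d (t m x) = t (N.d m) x + sgn i • t m (X.d x)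
  span : ∀ y : T.carrier, y ∈ Submodule.span R {z : T.carrier | ∃ m x, z = t m x}
  univ : ∀ (Q : Type u) [AddCommGroup Q] [Module R Q] (h : N.carrier → X.carrier → Q),
    (∀ m m' x, h (m + m') x = h m x + h m' x) →
    (∀ m x x', h m (x + x') = h m x + h m x') →
    (∀ (r : R) m x, h (r • m) x = r • h m x) →
    (∀ (r : R) m x, h m (r • x) = r • h m x) →
    (∀ {i j : ℤ} (m x) (b : P.B.carrier), b ∈ P.B.gr i → x ∈ X.gr j →
      h (N.smul m b) x = sgn (i * j) • h m (X.smul x b)) →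
    ∃! H : T.carrier →ₗ[R] Q, ∀ m x, H (t m x) = h m x

/-- `D : B → X` is an `A`-derivation of degree `n` with values in the DG `B`-module `X`. -/
def IsDerB (P : EnvSetup R) (X : DGMod P.B) (n : ℤ) (D : P.B.carrier → X.carrier) : Prop :=
  (∀ b c, D (b + c) = D b + D c) ∧
  (∀ (r : R) b, D (r • b) = r • D b) ∧
  (∀ (b : P.B.carrier) (a : P.A.carrier),
    D (b * P.φ.toFun a) = X.smul (D b) (P.φ.toFun a)) ∧
  (∀ i : ℤ, ∀ b ∈ P.B.gr i, D b ∈ X.gr (i + n)) ∧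
  (∀ (i j : ℤ) (b c : P.B.carrier), b ∈ P.B.gr i → c ∈ P.B.gr j →
    D (b * c) = X.smul (D b) c + sgn (i * j) • X.smul (D c) b)

/-- `D` belongs to `Der_A(B,X)` for a DG `B`-module `X`. -/
def InSDerB (P : EnvSetup R) (X : DGMod P.B) (D : P.B.carrier → X.carrier) : Prop :=
  ∃ (s : Finset ℤ) (g : ℤ → P.B.carrier → X.carrier),
    (∀ n ∈ s, IsDerB P X n (g n)) ∧ ∀ b, D b = ∑ n ∈ s, g n b

/-- `ψ : N → N ⊗_B X` is a `D`-connection on `N` along the DG `B`-module `X`. -/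
def IsConnB {P : EnvSetup R} {N X : DGMod P.B} (τ : TensorBB P N X)
    (n : ℤ) (D : P.B.carrier → X.carrier) (ψ : N.carrier → τ.T.carrier) : Prop :=
  (∀ x y : N.carrier, ψ (x + y) = ψ x + ψ y) ∧
  (∀ (r : R) (x : N.carrier), ψ (r • x) = r • ψ x) ∧
  (∀ i : ℤ, ∀ x ∈ N.gr i, ψ x ∈ τ.T.gr (i + n)) ∧
  (∀ (i : ℤ) (x : N.carrier) (b : P.B.carrier), x ∈ N.gr i →
    ψ (N.smul x b) = τ.T.smul (ψ x) b + sgn (n * i) • τ.t x (D b))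

/-- A `Der_A(B,X)`-connection on `N` along a DG `B`-module `X` (equivalently, a DG
`B`-module splitting of `ν : Conn(N, N ⊗_B X) → Der_A(B,X)`). -/
def IsLConnB {P : EnvSetup R} {N X : DGMod P.B} (τ : TensorBB P N X)
    (Cn : (P.B.carrier → X.carrier) → N.carrier → τ.T.carrier) : Prop :=
  (∀ (n : ℤ) (D), IsDerB P X n D → IsConnB τ n D (Cn D)) ∧
  (∀ D D', InSDerB P X D → InSDerB P X D' →
    ∀ x, Cn (fun b => D b + D' b) x = Cn D x + Cn D' x) ∧
  (∀ (r : R) (D), InSDerB P X D → ∀ x, Cn (fun b => r • D b) x = r • Cn D x) ∧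
  (∀ (k n : ℤ) (b : P.B.carrier) (D), b ∈ P.B.gr k → IsDerB P X n D →
    ∀ x, Cn (fun c => X.lsmul b (D c)) x = τ.T.lsmul b (Cn D x)) ∧
  (∀ (n : ℤ) (D), IsDerB P X n D →
    ∀ x, Cn (fun b => X.d (D b) - sgn n • D (P.B.d b)) x
      = τ.T.d (Cn D x) - sgn n • Cn D (N.d x))

/-- `D : B → B` is an `A`-derivation of `B` of degree `n` (an element of
`Der_A(B) = Der_A(B,B)`). -/
def IsDerSelf (P : EnvSetup R) (n : ℤ) (D : P.B.carrier → P.B.carrier) : Prop :=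
  (∀ b c, D (b + c) = D b + D c) ∧
  (∀ (r : R) b, D (r • b) = r • D b) ∧
  (∀ (b : P.B.carrier) (a : P.A.carrier), D (b * P.φ.toFun a) = D b * P.φ.toFun a) ∧
  (∀ i : ℤ, ∀ b ∈ P.B.gr i, D b ∈ P.B.gr (i + n)) ∧
  (∀ (i j : ℤ) (b c : P.B.carrier), b ∈ P.B.gr i → c ∈ P.B.gr j →
    D (b * c) = D b * c + sgn (i * j) • (D c * b))

/-- `D` belongs to `Der_A(B) = ⊕_{n ∈ ℤ} Der_A(B)_n`. -/
def InSDerSelf (P : EnvSetup R) (D : P.B.carrier → P.B.carrier) : Prop :=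
  ∃ (s : Finset ℤ) (g : ℤ → P.B.carrier → P.B.carrier),
    (∀ n ∈ s, IsDerSelf P n (g n)) ∧ ∀ b, D b = ∑ n ∈ s, g n b

/-- `ψ : N → N` is a `D`-connection on `N` along `B` (identifying `N ⊗_B B ≅ N`):
`ψ(xb) = ψ(x)b + (-1)^{|D||x|} x D(b)`. -/
def IsConnSelf (P : EnvSetup R) (N : DGMod P.B) (n : ℤ)
    (D : P.B.carrier → P.B.carrier) (ψ : N.carrier → N.carrier) : Prop :=
  (∀ x y : N.carrier, ψ (x + y) = ψ x + ψ y) ∧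
  (∀ (r : R) (x : N.carrier), ψ (r • x) = r • ψ x) ∧
  (∀ i : ℤ, ∀ x ∈ N.gr i, ψ x ∈ N.gr (i + n)) ∧
  (∀ (i : ℤ) (x : N.carrier) (b : P.B.carrier), x ∈ N.gr i →
    ψ (N.smul x b) = N.smul (ψ x) b + sgn (n * i) • N.smul x (D b))

/-- A `Der_A(B)`-connection on `N` (along `B`). -/
def IsLConnSelf (P : EnvSetup R) (N : DGMod P.B)
    (Cn : (P.B.carrier → P.B.carrier) → N.carrier → N.carrier) : Prop :=
  (∀ (n : ℤ) (D), IsDerSelf P n D → IsConnSelf P N n D (Cn D)) ∧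
  (∀ D D', InSDerSelf P D → InSDerSelf P D' →
    ∀ x, Cn (fun b => D b + D' b) x = Cn D x + Cn D' x) ∧
  (∀ (r : R) (D), InSDerSelf P D → ∀ x, Cn (fun b => r • D b) x = r • Cn D x) ∧
  (∀ (k n : ℤ) (b : P.B.carrier) (D), b ∈ P.B.gr k → IsDerSelf P n D →
    ∀ x, Cn (fun c => b * D c) x = N.lsmul b (Cn D x)) ∧
  (∀ (n : ℤ) (D), IsDerSelf P n D →
    ∀ x, Cn (fun b => P.B.d (D b) - sgn n • D (P.B.d b)) x
      = N.d (Cn D x) - sgn n • Cn D (N.d x))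

/-- The trivial `D`-connection `φ(D)` on a graded-free DG `B`-module `N` with
homogeneous basis `e` (of degrees `deg`), along a DG `Bᵉ`-module `X`:
`φ(D)(Σ e_λ b_λ) = Σ (-1)^{|D||e_λ|} e_λ ⊗ D(b_λ)`. -/
noncomputable def trivConn {P : EnvSetup R} {N : DGMod P.B} {X : DGMod P.E}
    (τ : TensorBX P N X) {ι : Type u} (e : ι → N.carrier) (deg : ι → ℤ)
    (hb : Function.Bijective fun c : ι →₀ P.B.carrier => c.sum fun l b => N.smul (e l) b)
    (n : ℤ) (D : P.B.carrier → X.carrier) : N.carrier → τ.T.carrier :=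
  fun x => ((Equiv.ofBijective _ hb).symm x).sum fun l b => sgn (n * deg l) • τ.t (e l) (D b)

/-- The trivial `D`-connection on a graded-free DG `B`-module `N` along `B`
(identifying `N ⊗_B B ≅ N`). -/
noncomputable def trivConnSelf {P : EnvSetup R} (N : DGMod P.B) {ι : Type u}
    (e : ι → N.carrier) (deg : ι → ℤ)
    (hb : Function.Bijective fun c : ι →₀ P.B.carrier => c.sum fun l b => N.smul (e l) b)
    (n : ℤ) (D : P.B.carrier → P.B.carrier) : N.carrier → N.carrier :=
  fun x => ((Equiv.ofBijective _ hb).symm x).sum fun l b => sgn (n * deg l) • N.smul (e l) (D b)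

/-- The Atiyah homomorphism `α : N → N ⊗_B J(-1)` of a semifree DG `B`-module `N` with
semifree basis `e` and structure coefficients `cf` (`∂(e_λ) = Σ_μ e_μ (cf λ)_μ`):
the `B`-linear map with `α(e_λ) = Σ_μ e_μ ⊗ δ((cf λ)_μ)`. -/
noncomputable def atiyah {P : EnvSetup R} {N : DGMod P.B} (τ : TensorBX P N P.J)
    {ι : Type u} (e : ι → N.carrier)
    (hb : Function.Bijective fun c : ι →₀ P.B.carrier => c.sum fun l b => N.smul (e l) b)
    (cf : ι → ι →₀ P.B.carrier) : N.carrier → τ.T.carrier :=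
  fun x => ((Equiv.ofBijective _ hb).symm x).sum fun l b =>
    τ.T.smul ((cf l).sum fun m b' => τ.t (e m) (P.δ b')) b

/-- The classical Atiyah map `ᾱ : N → N ⊗_B Ω(-1)` (or more generally the analogue of the
Atiyah homomorphism along a DG `B`-module `X` with respect to a derivation-like map
`D0 : B → X`): the `B`-linear map with `ᾱ(e_λ) = Σ_μ e_μ ⊗ D0((cf λ)_μ)`. -/
noncomputable def atiyahB {P : EnvSetup R} {N X : DGMod P.B} (τ : TensorBB P N X)
    {ι : Type u} (e : ι → N.carrier)
    (hb : Function.Bijective fun c : ι →₀ P.B.carrier => c.sum fun l b => N.smul (e l) b)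
    (cf : ι → ι →₀ P.B.carrier) (D0 : P.B.carrier → X.carrier) : N.carrier → τ.T.carrier :=
  fun x => ((Equiv.ofBijective _ hb).symm x).sum fun l b =>
    τ.T.smul ((cf l).sum fun m b' => τ.t (e m) (D0 b')) b

/-- The Kodaira–Spencer homomorphism `κ(D) = [∂^N, φ(D)] - φ([d^B, D])` on a graded-free
DG `B`-module `N` with respect to the homogeneous basis `e`. -/
noncomputable def kappa {P : EnvSetup R} (N : DGMod P.B) {ι : Type u}
    (e : ι → N.carrier) (deg : ι → ℤ)
    (hb : Function.Bijective fun c : ι →₀ P.B.carrier => c.sum fun l b => N.smul (e l) b)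
    (n : ℤ) (D : P.B.carrier → P.B.carrier) : N.carrier → N.carrier :=
  fun x =>
    (N.d (trivConnSelf N e deg hb n D x) - sgn n • trivConnSelf N e deg hb n D (N.d x))
      - trivConnSelf N e deg hb (n - 1) (fun b => P.B.d (D b) - sgn n • D (P.B.d b)) x

/-- The setup of the paper enriched with the differential module
`Ω = Ω_A(B) = J/J²` of `B` over `A`, a DG `B`-module with the natural
projection `pOm : J → Ω` whose kernel is `J²`. -/
structure OmegaSetup (R : Type u) [CommRing R] : Type (u + 1) where
  env : EnvSetup R
  Ω : DGMod env.B
  pOm : env.J.carrier → Ω.carrier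
  pOm_add : ∀ x y, pOm (x + y) = pOm x + pOm y
  pOm_rsmul : ∀ (r : R) x, pOm (r • x) = r • pOm x
  pOm_surj : Function.Surjective pOm
  pOm_gr : ∀ {i : ℤ} {x}, x ∈ env.J.gr i → pOm x ∈ Ω.gr i
  pOm_d : ∀ x, pOm (env.J.d x) = Ω.d (pOm x)
  pOm_smul : ∀ x ee, pOm (env.J.smul x ee) = Ω.smul (pOm x) (env.mulB.toFun ee)
  pOm_ker : ∀ x, pOm x = 0 ↔
    env.ιJ x ∈ Submodule.span R
      {y : env.E.carrier | ∃ u v : env.J.carrier, y = env.ιJ u * env.ιJ v}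

/-- The universal derivation `δ̄ : B → Ω = J/J²` induced by `δ`. -/
def OmegaSetup.δbar (Q : OmegaSetup R) : Q.env.B.carrier → Q.Ω.carrier :=
  fun b => Q.pOm (Q.env.δ b)

end DG


/-!
The retraction `e ↦ e - 1 ⊗ π_B(e)` of `Bᵉ` onto `J` sends `b ⊗ c` to `δ(b)·(1 ⊗ c)`, so `J`
is spanned over `R` by these elements with `b, c` homogeneous. Hence a `Bᵉ`-linear map on `J`
is determined by its composite with `δ`, and it vanishes in degrees `≤ n` as soon as its
composite with `δ` does, `B` being non-negatively graded.

Conversely, a derivation `D` of degree `n` extends by the universal property of `B ⊗_A B` to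
the `R`-linear map `H : b ⊗ c ↦ D(b)·(1 ⊗ c)` on `Bᵉ`. It is right `(1 ⊗ B)`-linear by
construction, and the Leibniz rule together with the graded symmetry of `D(b)·δ(c)` gives
`H(e·(u ⊗ 1)) = H(e)·(u ⊗ 1) ± D(u)·(1 ⊗ π_B(e))`. So `H` restricts to a `Bᵉ`-linear map on
`J = ker π_B`, and `H(δ b) = D(b)·1 - D(1)·b = D(b)`.
-/

namespace DirectSum.IsInternal

variable {ι R M N : Type*} [DecidableEq ι] [Semiring R] [AddCommMonoid M] [Module R M]
  [AddCommMonoid N] [Module R N] {gr : ι → Submodule R M}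

theorem apply_mem_of_span_eq_top (hgr : IsInternal gr) (f : M →ₗ[R] N)
    {S : Set M} (hS : Submodule.span R S = ⊤) {k : ι} {T : Submodule R N}
    (hST : ∀ s ∈ S, ∃ i, s ∈ gr i ∧ (i = k → f s ∈ T)) {x : M} (hx : x ∈ gr k) :
    f x ∈ T := by
  let := hgr.chooseDecomposition
  have hproj : ∀ y, f (decompose gr y k) ∈ T := fun y => by
    induction hS ▸ Submodule.mem_top (x := y) using Submodule.span_induction with
    | mem s hs =>
      obtain ⟨i, hsi, hfs⟩ := hST s hs
      by_cases hik : i = k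
      · subst hik
        rw [decompose_of_mem_same gr hsi]
        exact hfs rfl
      · rw [decompose_of_mem_ne gr hsi hik, map_zero]
        exact T.zero_mem
    | zero => simp
    | add y z _ _ hy hz => simpa [decompose_add] using T.add_mem hy hz
    | smul r y _ hy => simpa [decompose_smul, DirectSum.smul_apply] using T.smul_mem r hy
  simpa [decompose_of_mem_same gr hx] using hproj x

theorem apply_mem_span_image2_homogeneous {Q : Type*} [AddCommGroup Q] [Module R Q]
    (hgr : IsInternal gr) (g : M → M → Q) (hl : ∀ a₁ a₂ b, g (a₁ + a₂) b = g a₁ b + g a₂ b)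
    (hr : ∀ a b₁ b₂, g a (b₁ + b₂) = g a b₁ + g a b₂) (a b : M) :
    g a b ∈ Submodule.span R (Set.image2 g {a | SetLike.IsHomogeneousElem gr a}
      {b | SetLike.IsHomogeneousElem gr b}) := by
  have hsup : ∀ a : M, a ∈ ⨆ i, gr i := fun a => hgr.submodule_iSup_eq_top ▸ Submodule.mem_top
  have hl0 : ∀ b, g 0 b = 0 := fun b => (AddMonoidHom.mk' (g · b) (hl · · b)).map_zero
  have hr0 : ∀ a, g a 0 = 0 := fun a => (AddMonoidHom.mk' (g a) (hr a)).map_zero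
  refine Submodule.iSup_induction gr (motive := fun a => g a b ∈ _) (hsup a)
    (fun i a ha => ?_) (by simp [hl0])
    (fun a₁ a₂ h₁ h₂ => by simpa [hl] using Submodule.add_mem _ h₁ h₂)
  refine Submodule.iSup_induction gr (motive := fun b => g a b ∈ _) (hsup b)
    (fun j b hb => ?_) (by simp [hr0])
    (fun b₁ b₂ h₁ h₂ => by simpa [hr] using Submodule.add_mem _ h₁ h₂)
  exact Submodule.subset_span ⟨a, ⟨i, ha⟩, b, ⟨j, hb⟩, rfl⟩

end DirectSum.IsInternal

namespace DG

universe u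

lemma sgn_add (a b : ℤ) : sgn (a + b) = sgn a * sgn b := by
  simp only [sgn, zpow_add, Units.val_mul]

lemma sgn_mul_self (a : ℤ) : sgn a * sgn a = 1 := by
  simp only [sgn, ← Units.val_mul, Int.units_mul_self, Units.val_one]

lemma sgn_zero : sgn 0 = 1 := rfl

section

variable {R : Type u} [CommRing R]

section Basic

variable {S T : DGAlg R}

lemma DGHom.map_zero (f : DGHom S T) : f.toFun 0 = 0 := f.toRingHom.map_zero

lemma DGHom.map_sub (f : DGHom S T) (a b : S.carrier) :
    f.toFun (a - b) = f.toFun a - f.toFun b :=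
  f.toRingHom.map_sub a b

lemma DGHom.map_rsmul (f : DGHom S T) (r : R) (a : S.carrier) :
    f.toFun (r • a) = r • f.toFun a := by
  rw [Algebra.smul_def, f.map_mul, f.map_algebraMap, ← Algebra.smul_def]

lemma DGMod.smul_zero (M : DGMod S) (x : M.carrier) : M.smul x 0 = 0 :=
  (AddMonoidHom.mk' (M.smul x) (M.smul_add x)).map_zero

lemma DGMod.zero_smul (M : DGMod S) (a : S.carrier) : M.smul 0 a = 0 :=
  (AddMonoidHom.mk' (M.smul · a) (M.add_smul · · a)).map_zero

lemma DGMod.sub_smul (M : DGMod S) (x y : M.carrier) (a : S.carrier) :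
    M.smul (x - y) a = M.smul x a - M.smul y a :=
  (AddMonoidHom.mk' (M.smul · a) (M.add_smul · · a)).map_sub x y

lemma DGMod.smul_sub (M : DGMod S) (x : M.carrier) (a b : S.carrier) :
    M.smul x (a - b) = M.smul x a - M.smul x b :=
  (AddMonoidHom.mk' (M.smul x) (M.smul_add x)).map_sub a b

lemma DGMod.zsmul_smul (M : DGMod S) (k : ℤ) (x : M.carrier) (a : S.carrier) :
    M.smul (k • x) a = k • M.smul x a :=
  map_zsmul (AddMonoidHom.mk' (M.smul · a) (M.add_smul · · a)) k x

lemma DGMod.smul_zsmul (M : DGMod S) (k : ℤ) (x : M.carrier) (a : S.carrier) :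
    M.smul x (k • a) = k • M.smul x a :=
  map_zsmul (AddMonoidHom.mk' (M.smul x) (M.smul_add x)) k a

lemma DGMod.smul_rsmul_right (M : DGMod S) (r : R) (x : M.carrier) (a : S.carrier) :
    M.smul x (r • a) = r • M.smul x a := by
  rw [Algebra.smul_def, M.smul_mul, M.smul_algebraMap, M.smul_rsmul]

lemma DGMod.sum_smul (M : DGMod S) {ι : Type*} (s : Finset ι) (x : ι → M.carrier)
    (a : S.carrier) : M.smul (∑ i ∈ s, x i) a = ∑ i ∈ s, M.smul (x i) a :=
  map_sum (AddMonoidHom.mk' (M.smul · a) (M.add_smul · · a)) x s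

lemma DGAlg.eq_zero_of_mem_gr_of_neg (S : DGAlg R) {i : ℤ} {a : S.carrier} (ha : a ∈ S.gr i)
    (hi : i < 0) : a = 0 :=
  (Submodule.mem_bot R).mp (S.nonneg i hi ▸ ha)

end Basic

section InSHom

variable {S : DGAlg R} {M N : DGMod S} {f : M.carrier → N.carrier}

lemma InSHom.map_add (hf : InSHom M N f) (x y : M.carrier) : f (x + y) = f x + f y := by
  obtain ⟨s, g, hg, hfg⟩ := hf
  simp only [hfg, ← Finset.sum_add_distrib]
  exact Finset.sum_congr rfl fun n hn => (hg n hn).1 x y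

lemma InSHom.map_rsmul (hf : InSHom M N f) (r : R) (x : M.carrier) : f (r • x) = r • f x := by
  obtain ⟨s, g, hg, hfg⟩ := hf
  simp only [hfg, Finset.smul_sum]
  exact Finset.sum_congr rfl fun n hn => (hg n hn).2.1 r x

lemma InSHom.map_smul (hf : InSHom M N f) (x : M.carrier) (a : S.carrier) :
    f (M.smul x a) = N.smul (f x) a := by
  obtain ⟨s, g, hg, hfg⟩ := hf
  simp only [hfg, N.sum_smul]
  exact Finset.sum_congr rfl fun n hn => (hg n hn).2.2.1 x a

def InSHom.toLinearMap (hf : InSHom M N f) : M.carrier →ₗ[R] N.carrier where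
  toFun := f
  map_add' := hf.map_add
  map_smul' := hf.map_rsmul

lemma InSHom.map_zero (hf : InSHom M N f) : f 0 = 0 := hf.toLinearMap.map_zero

end InSHom

namespace EnvSetup

variable (P : EnvSetup R)

lemma ιJ_zero : P.ιJ 0 = 0 := (AddMonoidHom.mk' P.ιJ P.ιJ_add).map_zero

lemma ιJ_zsmul (k : ℤ) (x : P.J.carrier) : P.ιJ (k • x) = k • P.ιJ x :=
  map_zsmul (AddMonoidHom.mk' P.ιJ P.ιJ_add) k x

lemma δ_add (b c : P.B.carrier) : P.δ (b + c) = P.δ b + P.δ c :=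
  P.ιJ_inj <| by rw [P.ιJ_add, P.ιJ_δ, P.ιJ_δ, P.ιJ_δ, P.inl.map_add, P.inr.map_add]; abel

lemma δ_rsmul (r : R) (b : P.B.carrier) : P.δ (r • b) = r • P.δ b :=
  P.ιJ_inj <| by rw [P.ιJ_rsmul, P.ιJ_δ, P.ιJ_δ, P.inl.map_rsmul, P.inr.map_rsmul, smul_sub]

lemma δ_mem_gr {i : ℤ} {b : P.B.carrier} (hb : b ∈ P.B.gr i) : P.δ b ∈ P.J.gr i := by
  rw [P.ιJ_gr, P.ιJ_δ]
  exact sub_mem (P.inl.map_gr hb) (P.inr.map_gr hb)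

lemma δ_mul_φ (b : P.B.carrier) (a : P.A.carrier) :
    P.δ (b * P.φ.toFun a) = P.J.smul (P.δ b) (P.inr.toFun (P.φ.toFun a)) :=
  P.ιJ_inj <| by
    rw [P.ιJ_smul, P.ιJ_δ, P.ιJ_δ, P.inl.map_mul, P.inr.map_mul, P.inl_inr_phi, sub_mul]

lemma δ_d (b : P.B.carrier) : P.δ (P.B.d b) = P.J.d (P.δ b) :=
  P.ιJ_inj <| by rw [P.ιJ_d, P.ιJ_δ, P.ιJ_δ, map_sub, P.inl.map_d, P.inr.map_d]

lemma δ_mul {i j : ℤ} {b c : P.B.carrier} (hb : b ∈ P.B.gr i) (hc : c ∈ P.B.gr j) :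
    P.δ (b * c) = P.J.smul (P.δ b) (P.inr.toFun c)
      + sgn (i * j) • P.J.smul (P.δ c) (P.inl.toFun b) := by
  refine P.ιJ_inj ?_
  have hcomm : P.inr.toFun c * P.inl.toFun b = sgn (j * i) • (P.inl.toFun b * P.inr.toFun c) :=
    P.E.gcomm (P.inr.map_gr hc) (P.inl.map_gr hb)
  rw [P.ιJ_add, P.ιJ_zsmul, P.ιJ_smul, P.ιJ_smul, P.ιJ_δ, P.ιJ_δ, P.ιJ_δ, P.inl.map_mul,
    P.inr.map_mul, sub_mul, sub_mul, hcomm, mul_comm j i, smul_sub, smul_smul, sgn_mul_self,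
    one_smul, P.E.gcomm (P.inl.map_gr hb) (P.inl.map_gr hc)]
  abel

lemma ιJ_δ_smul (b c : P.B.carrier) :
    P.ιJ (P.J.smul (P.δ b) (P.inr.toFun c))
      = P.inl.toFun b * P.inr.toFun c - P.inl.toFun 1 * P.inr.toFun (b * c) := by
  rw [P.ιJ_smul, P.ιJ_δ, sub_mul, P.inl.map_one, one_mul, P.inr.map_mul]

lemma exists_ιJ_eq_sub_inr_mulB (e : P.E.carrier) :
    ∃ x, P.ιJ x = e - P.inr.toFun (P.mulB.toFun e) :=
  (P.ιJ_range _).mpr (by rw [P.mulB.map_sub, P.mulB_inr, sub_self])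

def retractJ : P.E.carrier →ₗ[R] P.J.carrier where
  toFun e := (P.exists_ιJ_eq_sub_inr_mulB e).choose
  map_add' e e' := P.ιJ_inj <| by
    have h := fun e => (P.exists_ιJ_eq_sub_inr_mulB e).choose_spec
    rw [P.ιJ_add, h, h, h, P.mulB.map_add, P.inr.map_add]
    abel
  map_smul' r e := P.ιJ_inj <| by
    have h := fun e => (P.exists_ιJ_eq_sub_inr_mulB e).choose_spec
    rw [P.ιJ_rsmul, h, h, P.mulB.map_rsmul, P.inr.map_rsmul, smul_sub, RingHom.id_apply]

lemma ιJ_retractJ (e : P.E.carrier) :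
    P.ιJ (P.retractJ e) = e - P.inr.toFun (P.mulB.toFun e) :=
  (P.exists_ιJ_eq_sub_inr_mulB e).choose_spec

lemma retractJ_ιJ (x : P.J.carrier) : P.retractJ (P.ιJ x) = x :=
  P.ιJ_inj <| by rw [ιJ_retractJ, (P.ιJ_range _).mp ⟨x, rfl⟩, P.inr.map_zero, sub_zero]

lemma retractJ_tmul (b c : P.B.carrier) :
    P.retractJ (P.inl.toFun b * P.inr.toFun c) = P.J.smul (P.δ b) (P.inr.toFun c) :=
  P.ιJ_inj <| by
    rw [ιJ_retractJ, P.ιJ_smul, P.ιJ_δ, P.mulB.map_mul, P.mulB_inl, P.mulB_inr, P.inr.map_mul,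
      sub_mul]

lemma span_tmul_homogeneous :
    Submodule.span R (Set.image2 (fun b c => P.inl.toFun b * P.inr.toFun c)
      {b | SetLike.IsHomogeneousElem P.B.gr b} {c | SetLike.IsHomogeneousElem P.B.gr c}) = ⊤ :=
  Submodule.eq_top_iff'.mpr fun e => Submodule.span_le.mpr
    (by
      rintro _ ⟨b, c, rfl⟩
      exact P.B.internal.apply_mem_span_image2_homogeneous _
        (fun _ _ _ => by rw [P.inl.map_add, add_mul]) (fun _ _ _ => by rw [P.inr.map_add, mul_add])
        b c)
    (P.span e)

lemma span_δ_smul_homogeneous :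
    Submodule.span R (Set.image2 (fun b c => P.J.smul (P.δ b) (P.inr.toFun c))
      {b | SetLike.IsHomogeneousElem P.B.gr b} {c | SetLike.IsHomogeneousElem P.B.gr c}) = ⊤ := by
  refine Submodule.eq_top_iff'.mpr fun x => ?_
  rw [← P.retractJ_ιJ x]
  refine Submodule.span_le.mpr ?_ (Submodule.apply_mem_span_image_of_mem_span _ (P.span (P.ιJ x)))
  rintro _ ⟨_, ⟨b, c, rfl⟩, rfl⟩
  rw [SetLike.mem_coe, retractJ_tmul]
  exact P.B.internal.apply_mem_span_image2_homogeneous _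
    (fun _ _ _ => by rw [P.δ_add, P.J.add_smul]) (fun _ _ _ => by rw [P.inr.map_add, P.J.smul_add])
    b c

end EnvSetup

section Homomorphisms

variable {P : EnvSetup R} {X : DGMod P.E}

lemma IsGLin.isDer_comp_δ {n : ℤ} {f : P.J.carrier → X.carrier} (hf : IsGLin P.J X n f) :
    IsDer P X n (fun b => f (P.δ b)) := by
  obtain ⟨hadd, hrsmul, hsmul, hgr⟩ := hf
  refine ⟨fun b c => ?_, fun r b => ?_, fun b a => ?_, fun i b hb => hgr i _ (P.δ_mem_gr hb),
    fun i j b c hb hc => ?_⟩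
  · simp only [P.δ_add, hadd]
  · simp only [P.δ_rsmul, hrsmul]
  · simp only [P.δ_mul_φ, hsmul]
  · have hzsmul : ∀ (k : ℤ) x, f (k • x) = k • f x := map_zsmul (AddMonoidHom.mk' f hadd)
    simp only [P.δ_mul hb hc, hadd, hzsmul, hsmul]

lemma InSHom.inSDer_comp_δ {f : P.J.carrier → X.carrier} (hf : InSHom P.J X f) :
    InSDer P X (fun b => f (P.δ b)) := by
  obtain ⟨s, g, hg, hfg⟩ := hf
  exact ⟨s, fun n b => g n (P.δ b), fun n hn => (hg n hn).isDer_comp_δ, fun b => hfg (P.δ b)⟩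

lemma InSHom.eq_of_comp_δ_eq {f g : P.J.carrier → X.carrier} (hf : InSHom P.J X f)
    (hg : InSHom P.J X g) (h : ∀ b, f (P.δ b) = g (P.δ b)) : f = g := by
  refine congrArg DFunLike.coe
    (LinearMap.ext_on (f := hf.toLinearMap) (g := hg.toLinearMap) P.span_δ_smul_homogeneous ?_)
  rintro _ ⟨b, -, c, -, rfl⟩
  change f _ = g _
  rw [hf.map_smul, hg.map_smul, h]

lemma InSHom.eq_zero_of_comp_δ_eq_zero {f : P.J.carrier → X.carrier} (hf : InSHom P.J X f)
    {n : ℤ} (h : ∀ k ≤ n, ∀ b ∈ P.B.gr k, f (P.δ b) = 0) {k : ℤ} (hk : k ≤ n) {x : P.J.carrier}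
    (hx : x ∈ P.J.gr k) : f x = 0 := by
  refine (Submodule.mem_bot R).mp
    (P.J.internal.apply_mem_of_span_eq_top hf.toLinearMap P.span_δ_smul_homogeneous ?_ hx)
  rintro _ ⟨b, ⟨i, hb⟩, c, ⟨j, hc⟩, rfl⟩
  refine ⟨i + j, P.J.smul_mem (P.δ_mem_gr hb) (P.inr.map_gr hc), fun hij => ?_⟩
  change f (P.J.smul (P.δ b) (P.inr.toFun c)) ∈ ⊥
  rcases lt_or_ge j 0 with hj | hj
  · rw [P.B.eq_zero_of_mem_gr_of_neg hc hj, P.inr.map_zero, P.J.smul_zero, hf.map_zero]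
    exact Submodule.zero_mem _
  · rw [hf.map_smul, h i (by omega) b hb, X.zero_smul]
    exact Submodule.zero_mem _

end Homomorphisms

section Derivations

variable {P : EnvSetup R} {X : DGMod P.E} {n : ℤ} {D : P.B.carrier → X.carrier}

lemma IsDer.map_one (hD : IsDer P X n D) : D 1 = 0 := by
  have h := hD.2.2.2.2 0 0 1 1 P.B.one_mem P.B.one_mem
  rw [mul_one, P.inr.map_one, P.inl.map_one, X.smul_one, mul_zero, sgn_zero, one_smul] at h
  exact left_eq_add.mp h

lemma IsDer.smul_inl_sub_inr_comm (hD : IsDer P X n D) {i k : ℤ} {b c : P.B.carrier}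
    (hb : b ∈ P.B.gr i) (hc : c ∈ P.B.gr k) :
    X.smul (D b) (P.inl.toFun c - P.inr.toFun c)
      = sgn (i * k) • X.smul (D c) (P.inl.toFun b - P.inr.toFun b) := by
  have hbc := hD.2.2.2.2 i k b c hb hc
  have hcb := hD.2.2.2.2 k i c b hc hb
  have hzsmul : ∀ (m : ℤ) a, D (m • a) = m • D a := map_zsmul (AddMonoidHom.mk' D hD.1)
  have hsymm : D (b * c) = sgn (i * k) • D (c * b) := by rw [P.B.gcomm hb hc, hzsmul]
  rw [hbc, hcb, smul_add, smul_smul, mul_comm k i, sgn_mul_self, one_smul] at hsymm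
  rw [X.smul_sub, X.smul_sub, smul_sub, sub_eq_sub_iff_add_eq_add, add_comm, ← hsymm, add_comm]

lemma IsDer.exists_tensorLift (hD : IsDer P X n D) :
    ∃ H : P.E.carrier →ₗ[R] X.carrier,
      ∀ b c, H (P.inl.toFun b * P.inr.toFun c) = X.smul (D b) (P.inr.toFun c) :=
  (P.univ X.carrier (fun b c => X.smul (D b) (P.inr.toFun c))
    (fun _ _ _ => by rw [hD.1, X.add_smul])
    (fun _ _ _ => by rw [P.inr.map_add, X.smul_add])
    (fun _ _ _ => by rw [hD.2.1, X.smul_rsmul])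
    (fun _ _ _ => by rw [P.inr.map_rsmul, X.smul_rsmul_right])
    (fun a b _ => by rw [hD.2.2.1 b a, ← X.smul_mul, ← P.inr.map_mul])).exists

def IsDer.tensorLift (hD : IsDer P X n D) : P.E.carrier →ₗ[R] X.carrier :=
  hD.exists_tensorLift.choose

lemma IsDer.tensorLift_tmul (hD : IsDer P X n D) (b c : P.B.carrier) :
    hD.tensorLift (P.inl.toFun b * P.inr.toFun c) = X.smul (D b) (P.inr.toFun c) :=
  hD.exists_tensorLift.choose_spec b c

lemma IsDer.tensorLift_mul_inr (hD : IsDer P X n D) (e : P.E.carrier) (c : P.B.carrier) :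
    hD.tensorLift (e * P.inr.toFun c) = X.smul (hD.tensorLift e) (P.inr.toFun c) := by
  induction P.span e using Submodule.span_induction with
  | mem _ he =>
    obtain ⟨b, b', rfl⟩ := he
    rw [mul_assoc, ← P.inr.map_mul, hD.tensorLift_tmul, hD.tensorLift_tmul, P.inr.map_mul,
      X.smul_mul]
  | zero => rw [zero_mul, map_zero, X.zero_smul]
  | add e e' _ _ he he' => rw [add_mul, map_add, map_add, he, he', X.add_smul]
  | smul r e _ he => rw [smul_mul_assoc, map_smul, map_smul, he, X.smul_rsmul]

lemma IsDer.tensorLift_tmul_mul_inl (hD : IsDer P X n D) {i j p : ℤ} {b c u : P.B.carrier}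
    (hb : b ∈ P.B.gr i) (hc : c ∈ P.B.gr j) (hu : u ∈ P.B.gr p) :
    hD.tensorLift (P.inl.toFun b * P.inr.toFun c * P.inl.toFun u)
      = X.smul (hD.tensorLift (P.inl.toFun b * P.inr.toFun c)) (P.inl.toFun u)
        + sgn ((i + j) * p) • X.smul (D u) (P.inr.toFun (b * c)) := by
  have hcomm : P.inr.toFun c * P.inl.toFun u = sgn (j * p) • (P.inl.toFun u * P.inr.toFun c) :=
    P.E.gcomm (P.inr.map_gr hc) (P.inl.map_gr hu)
  have hswap : X.smul (D b) (P.inl.toFun u) = X.smul (D b) (P.inr.toFun u)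
      + sgn (i * p) • (X.smul (D u) (P.inl.toFun b) - X.smul (D u) (P.inr.toFun b)) := by
    rw [← X.smul_sub, ← hD.smul_inl_sub_inr_comm hb hu, X.smul_sub]
    abel
  rw [mul_assoc, hcomm, mul_smul_comm, ← mul_assoc, ← P.inl.map_mul, map_zsmul,
    hD.tensorLift_tmul, hD.2.2.2.2 i p b u hb hu, hD.tensorLift_tmul, ← X.smul_mul, hcomm,
    X.smul_zsmul, X.smul_mul, hswap, P.inr.map_mul, X.smul_mul (D u)]
  simp only [X.add_smul, X.zsmul_smul, X.sub_smul, add_mul, sgn_add]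
  module

lemma IsDer.tensorLift_ιJ_mul_inl (hD : IsDer P X n D) (x : P.J.carrier) (u : P.B.carrier) :
    hD.tensorLift (P.ιJ x * P.inl.toFun u)
      = X.smul (hD.tensorLift (P.ιJ x)) (P.inl.toFun u) := by
  have hu : u ∈ ⨆ p, P.B.gr p := P.B.internal.submodule_iSup_eq_top ▸ Submodule.mem_top
  induction hu using Submodule.iSup_induction' with
  | zero => rw [P.inl.map_zero, mul_zero, map_zero, X.smul_zero]
  | add u v _ _ hu hv => rw [P.inl.map_add, mul_add, map_add, hu, hv, X.smul_add]
  | mem p u hu =>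
    have hx : x ∈ Submodule.span R _ := P.span_δ_smul_homogeneous ▸ Submodule.mem_top
    induction hx using Submodule.span_induction with
    | mem _ hx =>
      obtain ⟨b, ⟨i, hb⟩, c, ⟨j, hc⟩, rfl⟩ := hx
      have hbc : b * c ∈ P.B.gr (0 + (i + j)) := by rw [zero_add]; exact P.B.mul_mem hb hc
      rw [P.ιJ_δ_smul, sub_mul, map_sub, map_sub, hD.tensorLift_tmul_mul_inl hb hc hu,
        hD.tensorLift_tmul_mul_inl P.B.one_mem hbc hu, one_mul, X.sub_smul]
      simp only [zero_add, add_sub_add_right_eq_sub]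
    | zero => rw [P.ιJ_zero, zero_mul, map_zero, X.zero_smul]
    | add y z _ _ hy hz => rw [P.ιJ_add, add_mul, map_add, map_add, hy, hz, X.add_smul]
    | smul r y _ hy => rw [P.ιJ_rsmul, smul_mul_assoc, map_smul, map_smul, hy, X.smul_rsmul]

lemma IsDer.tensorLift_ιJ_smul (hD : IsDer P X n D) (x : P.J.carrier) (e : P.E.carrier) :
    hD.tensorLift (P.ιJ (P.J.smul x e)) = X.smul (hD.tensorLift (P.ιJ x)) e := by
  rw [P.ιJ_smul]
  induction P.span e using Submodule.span_induction with
  | mem _ he =>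
    obtain ⟨u, v, rfl⟩ := he
    rw [← mul_assoc, hD.tensorLift_mul_inr, hD.tensorLift_ιJ_mul_inl, X.smul_mul]
  | zero => rw [mul_zero, map_zero, X.smul_zero]
  | add e e' _ _ he he' => rw [mul_add, map_add, he, he', X.smul_add]
  | smul r e _ he => rw [mul_smul_comm, map_smul, he, X.smul_rsmul_right]

lemma IsDer.tensorLift_mem_gr (hD : IsDer P X n D) {k : ℤ} {e : P.E.carrier}
    (he : e ∈ P.E.gr k) : hD.tensorLift e ∈ X.gr (k + n) := by
  refine P.E.internal.apply_mem_of_span_eq_top _ P.span_tmul_homogeneous ?_ he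
  rintro _ ⟨b, ⟨i, hb⟩, c, ⟨j, hc⟩, rfl⟩
  refine ⟨i + j, P.E.mul_mem (P.inl.map_gr hb) (P.inr.map_gr hc), fun hij => ?_⟩
  rw [hD.tensorLift_tmul, ← hij, add_right_comm]
  exact X.smul_mem (hD.2.2.2.1 i b hb) (P.inr.map_gr hc)

lemma IsDer.tensorLift_ιJ_δ (hD : IsDer P X n D) (b : P.B.carrier) :
    hD.tensorLift (P.ιJ (P.δ b)) = D b := by
  calc hD.tensorLift (P.ιJ (P.δ b))
      = hD.tensorLift (P.ιJ (P.J.smul (P.δ b) (P.inr.toFun 1))) := by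
        rw [P.inr.map_one, P.J.smul_one]
    _ = D b := by
        rw [P.ιJ_δ_smul, map_sub, hD.tensorLift_tmul, hD.tensorLift_tmul, hD.map_one,
          X.zero_smul, sub_zero, P.inr.map_one, X.smul_one]

theorem IsDer.exists_isGLin_comp_δ (hD : IsDer P X n D) :
    ∃ f : P.J.carrier → X.carrier, IsGLin P.J X n f ∧ ∀ b, f (P.δ b) = D b :=
  ⟨fun x => hD.tensorLift (P.ιJ x),
    ⟨fun x y => by simp only [P.ιJ_add, map_add],
      fun r x => by simp only [P.ιJ_rsmul, map_smul],
      hD.tensorLift_ιJ_smul, fun i _ hx => hD.tensorLift_mem_gr ((P.ιJ_gr i _).mp hx)⟩,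
    hD.tensorLift_ιJ_δ⟩

theorem InSDer.exists_inSHom_comp_δ (hD : InSDer P X D) :
    ∃ f : P.J.carrier → X.carrier, InSHom P.J X f ∧ ∀ b, D b = f (P.δ b) := by
  obtain ⟨s, g, hg, hDg⟩ := hD
  have hlift : ∀ m, ∃ F : P.J.carrier → X.carrier,
      m ∈ s → IsGLin P.J X m F ∧ ∀ b, F (P.δ b) = g m b := fun m =>
    if hm : m ∈ s then (hg m hm).exists_isGLin_comp_δ.imp fun _ hF _ => hF
    else ⟨0, fun h => absurd h hm⟩
  choose F hF using hlift
  exact ⟨fun x => ∑ m ∈ s, F m x, ⟨s, F, fun m hm => (hF m hm).1, fun _ => rfl⟩,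
    fun b => (hDg b).trans (Finset.sum_congr rfl fun m hm => ((hF m hm).2 b).symm)⟩

end Derivations

end

/-- For a DG `Bᵉ`-module `X`, the map
`ϖ : Hom_{Bᵉ}(J, X) → Der_A(B, X)`, `f ↦ f ∘ δ`, is an isomorphism of topological
left DG `B`-modules.  (In this encoding `ϖ` is literally `f ↦ f ∘ δ`, so additivity
and compatibility with the left `B`-actions hold definitionally; the statement
records that `ϖ` maps degree-`n` homogeneous elements to degree-`n` homogeneous
elements, is bijective, intertwines the differentials, and is a homeomorphism.) -/
theorem varpi_isomorphism {R : Type u} [CommRing R] (P : EnvSetup R) (X : DGMod P.E) :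
    -- ϖ sends graded B^e-linear maps of degree n to A-derivations of degree n
    (∀ (n : ℤ) (f : P.J.carrier → X.carrier), IsGLin P.J X n f →
      IsDer P X n (fun b => f (P.δ b))) ∧
    (∀ f : P.J.carrier → X.carrier, InSHom P.J X f → InSDer P X (fun b => f (P.δ b))) ∧
    -- ϖ is injective
    (∀ f g : P.J.carrier → X.carrier, InSHom P.J X f → InSHom P.J X g →
      (∀ b, f (P.δ b) = g (P.δ b)) → f = g) ∧
    -- ϖ is surjective
    (∀ D : P.B.carrier → X.carrier, InSDer P X D →
      ∃ f : P.J.carrier → X.carrier, InSHom P.J X f ∧ ∀ b, D b = f (P.δ b)) ∧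
    -- ϖ intertwines the differentials: ∂^Der(f ∘ δ) = (∂^Hom f) ∘ δ
    (∀ (n : ℤ) (f : P.J.carrier → X.carrier), IsGLin P.J X n f →
      (fun b => X.d (f (P.δ b)) - sgn n • f (P.δ (P.B.d b)))
        = (fun b => X.d (f (P.δ b)) - sgn n • f (P.J.d (P.δ b)))) ∧
    -- ϖ is continuous
    (∀ n : ℤ, ∃ m : ℤ, ∀ f : P.J.carrier → X.carrier, InSHom P.J X f →
      (∀ k : ℤ, k ≤ m → ∀ x ∈ P.J.gr k, f x = 0) →
      ∀ k : ℤ, k ≤ n → ∀ b ∈ P.B.gr k, f (P.δ b) = 0) ∧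
    -- ϖ⁻¹ is continuous
    (∀ n : ℤ, ∃ m : ℤ, ∀ f : P.J.carrier → X.carrier, InSHom P.J X f →
      (∀ k : ℤ, k ≤ m → ∀ b ∈ P.B.gr k, f (P.δ b) = 0) →
      ∀ k : ℤ, k ≤ n → ∀ x ∈ P.J.gr k, f x = 0) := by
  refine ⟨fun _ _ hf => hf.isDer_comp_δ, fun _ hf => hf.inSDer_comp_δ,
    fun _ _ hf hg h => hf.eq_of_comp_δ_eq hg h, fun _ hD => hD.exists_inSHom_comp_δ,
    fun _ _ _ => funext fun b => by rw [P.δ_d], fun n => ⟨n, ?_⟩, fun n => ⟨n, ?_⟩⟩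
  · exact fun f _ h k hk b hb => h k hk _ (P.δ_mem_gr hb)
  · exact fun f hf h k hk x hx => hf.eq_zero_of_comp_δ_eq_zero h hk hx

end DG
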